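/- For the Boussinesq POD-ROM with uncertain quadratic term F̃(q) = [(C + ΔC)q]q where ‖C + ΔC‖_F ≤ c_max, negative definite symmetric D, and closure model H(q) = μ_nl c_max ‖q‖² diag(d_{11},...,d_{rr}) q with μ_nl > 0, μ_cl > 0: every q with ‖q‖ > 1/(-μ_nl max_i d_{ii}) satisfies q*(F̃(q) + μ_cl D q + H(q)) < 0. -/

import Mathlib

open scoped RealInnerProductSpace

/-! By Cauchy–Schwarz the uncertain quadratic term grows at most cubically,
`⟪q, [(C+ΔC)q]q⟫ ≤ ‖C+ΔC‖_F ‖q‖³ ≤ c_max ‖q‖³`, whereas the closure term is quartic and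
negative: `⟪q, diag(d_ii) q⟫ ≤ (max_i d_ii) ‖q‖²`, and `max_i d_ii < 0` because
`d_ii = ⟪e_i, D e_i⟫`. As `μ_cl ⟪q, Dq⟫ < 0`, the total is below
`c_max ‖q‖³ (1 + μ_nl (max_i d_ii) ‖q‖)`, which is negative beyond the given radius. -/

section
variable {ι : Type*} [Fintype ι]

lemma Matrix.diag_neg_of_inner_toEuclideanLin_neg [DecidableEq ι] {D : Matrix ι ι ℝ}
    (hD : ∀ p : EuclideanSpace ℝ ι, p ≠ 0 → ⟪p, Matrix.toEuclideanLin D p⟫ < 0) (i : ι) :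
    D i i < 0 := by
  simpa [EuclideanSpace.inner_single_left, Matrix.toLpLin_apply] using
    hD (EuclideanSpace.single i 1) (by simp)

lemma inner_toEuclideanLin_diagonal_le [DecidableEq ι] {d : ι → ℝ} {m : ℝ} (hd : ∀ i, d i ≤ m)
    (q : EuclideanSpace ℝ ι) :
    ⟪q, Matrix.toEuclideanLin (Matrix.diagonal d) q⟫ ≤ m * ‖q‖ ^ 2 := by
  rw [EuclideanSpace.real_norm_sq_eq, Finset.mul_sum]
  simp only [PiLp.inner_apply, Matrix.toLpLin_apply, Matrix.mulVec_diagonal,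
    RCLike.inner_apply, conj_trivial]
  exact Finset.sum_le_sum fun i _ => by nlinarith [hd i, sq_nonneg (q i)]

lemma sq_sum_mul_mul_le (a : ι → ι → ℝ) (q : EuclideanSpace ℝ ι) :
    (∑ j, ∑ k, a j k * q j * q k) ^ 2 ≤ (∑ j, ∑ k, a j k ^ 2) * ‖q‖ ^ 4 := by
  have hq : ∑ j, ∑ k, (q j * q k) ^ 2 = ‖q‖ ^ 4 := by
    simp_rw [mul_pow, ← Finset.mul_sum, ← Finset.sum_mul, ← EuclideanSpace.real_norm_sq_eq]
    ring
  have := Finset.sum_mul_sq_le_sq_mul_sq Finset.univ (fun p : ι × ι => a p.1 p.2)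
    (fun p => q p.1 * q p.2)
  simp only [Fintype.sum_prod_type, ← mul_assoc] at this
  rwa [hq] at this

lemma norm_tensorContraction_le (c : ι → ι → ι → ℝ) (q : EuclideanSpace ℝ ι) :
    ‖(WithLp.equiv 2 (ι → ℝ)).symm (fun i => ∑ j, ∑ k, c i j k * q j * q k)‖ ≤
      Real.sqrt (∑ i, ∑ j, ∑ k, c i j k ^ 2) * ‖q‖ ^ 2 := by
  rw [EuclideanSpace.norm_eq, ← Real.sqrt_sq (by positivity : 0 ≤ ‖q‖ ^ 2), ← Real.sqrt_mul
    (by positivity)]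
  refine Real.sqrt_le_sqrt ?_
  simp only [WithLp.equiv_symm_apply, Real.norm_eq_abs, sq_abs, Finset.sum_mul, ← pow_mul]
  exact Finset.sum_le_sum fun i _ => by simpa [Finset.sum_mul] using sq_sum_mul_mul_le (c i) q

end

theorem boussinesq_closure_energy_decrease_general {r : ℕ} (hr : 0 < r)
    (D : Matrix (Fin r) (Fin r) ℝ)
    (hneg : ∀ p : EuclideanSpace ℝ (Fin r), p ≠ 0 → ⟪p, Matrix.toEuclideanLin D p⟫ < 0)
    (c : Fin r → Fin r → Fin r → ℝ) (cmax : ℝ) (hcmax : 0 < cmax)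
    (hC : Real.sqrt (∑ i, ∑ j, ∑ k, (c i j k) ^ 2) ≤ cmax)
    (μcl μnl : ℝ) (hμcl : 0 < μcl) (hμnl : 0 < μnl)
    (q : EuclideanSpace ℝ (Fin r))
    (hq : ‖q‖ > 1 / (-(μnl * Finset.univ.sup' ⟨⟨0, hr⟩, Finset.mem_univ _⟩ fun i => D i i))) :
    ⟪q, (WithLp.equiv 2 (Fin r → ℝ)).symm (fun i => ∑ j, ∑ k, c i j k * q j * q k) +
        μcl • Matrix.toEuclideanLin D q +
        (μnl * cmax * ‖q‖ ^ 2) • Matrix.toEuclideanLin (Matrix.diagonal fun i => D i i) q⟫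
      < 0 := by
  set dmax := Finset.univ.sup' ⟨⟨0, hr⟩, Finset.mem_univ _⟩ fun i => D i i
  have hdmax : dmax < 0 :=
    (Finset.sup'_lt_iff _).mpr fun i _ => Matrix.diag_neg_of_inner_toEuclideanLin_neg hneg i
  have hq_pos : 0 < ‖q‖ := lt_trans (one_div_pos.mpr (by nlinarith)) hq
  have hradius : 1 + μnl * dmax * ‖q‖ < 0 := by
    have := (div_lt_iff₀ (by nlinarith : 0 < -(μnl * dmax))).mp hq
    linarith
  have hquad : ⟪q, (WithLp.equiv 2 (Fin r → ℝ)).symm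
      (fun i => ∑ j, ∑ k, c i j k * q j * q k)⟫ ≤ ‖q‖ * (cmax * ‖q‖ ^ 2) :=
    (real_inner_le_norm _ _).trans <| mul_le_mul_of_nonneg_left
      ((norm_tensorContraction_le c q).trans (by gcongr)) (norm_nonneg q)
  have hlin : ⟪q, Matrix.toEuclideanLin D q⟫ < 0 := hneg q (norm_pos_iff.mp hq_pos)
  have hclosure := inner_toEuclideanLin_diagonal_le (d := fun i => D i i) (m := dmax)
    (fun i => Finset.le_sup' (fun i => D i i) (Finset.mem_univ i)) q
  rw [inner_add_right, inner_add_right, real_inner_smul_right, real_inner_smul_right]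
  have hK : 0 < μnl * cmax * ‖q‖ ^ 2 := by positivity
  nlinarith [mul_le_mul_of_nonneg_left hclosure hK.le, mul_pos hμcl (neg_pos.mpr hlin),
    mul_pos (by positivity : 0 < cmax * ‖q‖ ^ 3) (neg_pos.mpr hradius)]

/-- for the Boussinesq POD-ROM with uncertain quadratic term
`F̃(q) = [(C+ΔC)q]q` (with `‖C+ΔC‖_F ≤ c_max`), symmetric negative definite `D`, and
closure model `H(q) = μ_nl c_max ‖q‖² diag(d_ii) q`, every `q` with
`‖q‖ > 1/(-μ_nl max_i d_ii)` satisfies `qᵀ(F̃(q) + μ_cl D q + H(q)) < 0`. -/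
theorem boussinesq_closure_energy_decrease {r : ℕ} (hr : 0 < r)
    (D : Matrix (Fin r) (Fin r) ℝ) (hherm : D.IsHermitian)
    (hneg : ∀ p : EuclideanSpace ℝ (Fin r), p ≠ 0 → ⟪p, Matrix.toEuclideanLin D p⟫ < 0)
    (c : Fin r → Fin r → Fin r → ℝ) (cmax : ℝ) (hcmax : 0 < cmax)
    (hC : Real.sqrt (∑ i, ∑ j, ∑ k, (c i j k) ^ 2) ≤ cmax)
    (μcl μnl : ℝ) (hμcl : 0 < μcl) (hμnl : 0 < μnl)
    (q : EuclideanSpace ℝ (Fin r))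
    (hq : ‖q‖ > 1 / (-(μnl * Finset.univ.sup' ⟨⟨0, hr⟩, Finset.mem_univ _⟩ fun i => D i i))) :
    ⟪q, (WithLp.equiv 2 (Fin r → ℝ)).symm (fun i => ∑ j, ∑ k, c i j k * q j * q k) +
        μcl • Matrix.toEuclideanLin D q +
        (μnl * cmax * ‖q‖ ^ 2) • Matrix.toEuclideanLin (Matrix.diagonal fun i => D i i) q⟫
      < 0 :=
  boussinesq_closure_energy_decrease_general hr D hneg c cmax hcmax hC μcl μnl hμcl hμnl q hq
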